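/- arXiv:1906.02602 — 3 statements merged into one kernel-verified Lean document; each statement's English description precedes it below -/
import Mathlib

section
/- Let S = {(i_1,j_1), …, (i_k,j_k)} be a multiset of index pairs with 1 ≤ i_w ≤ ⌊n/2⌋, j_w ∈ ℤ_n, and suppose the associated multigraph on vertex set ℤ_n with edges {j_w, (j_w + i_w) mod n} contains a cycle (of length ℓ ≥ 2). Then the random variables T_b(i_1,j_1), …, T_b(i_k,j_k) are not independent; in particular, on the event that the first ℓ−1 variables along the cycle all equal 0, the remaining variable on the cycle also equals 0 almost surely. -/
/-- The `n`-cyclic absolute value of `d ∈ ℤ_n`. -/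
def cycAbs (n : ℕ) (d : ZMod n) : ℕ := min d.val (-d).val

/-- The entry `T_b(i,j) = |b(j) − b(j+i)|_n`. -/
def Tb (n : ℕ) (b : ZMod n → ZMod n) (i j : ZMod n) : ℕ := cycAbs n (b j - b (j + i))

lemma cycAbs_eq_zero (n : ℕ) [NeZero n] (d : ZMod n) : cycAbs n d = 0 ↔ d = 0 := by
  unfold cycAbs
  rw [Nat.min_eq_zero_iff, ZMod.val_eq_zero, ZMod.val_eq_zero, neg_eq_zero, or_self]

/-- If the index pairs `(i_0,j_0), …, (i_{ℓ-1},j_{ℓ-1})` form a cycle in the associated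
multigraph (i.e. `j_{w+1} = j_w + i_w` cyclically, with nondegenerate edges `i_w ≠ 0`
and `ℓ ≥ 2`), then the random variables `T_b(i_w, j_w)` are not independent: the joint
probabilities do not factorize into the product of the marginals. In particular,
for every `b`, if the first `ℓ−1` variables along the cycle vanish, then so does the last. -/
theorem cycle_not_independent (n : ℕ) [NeZero n] (hn : 2 ≤ n) (ℓ : ℕ)
    (i j : Fin (ℓ + 2) → ZMod n) (hi : ∀ w, i w ≠ 0)
    (hcyc : ∀ w : Fin (ℓ + 2), j (w + 1) = j w + i w) :
    (∀ b : ZMod n → ZMod n,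
      (∀ w : Fin (ℓ + 2), w ≠ Fin.last (ℓ + 1) → Tb n b (i w) (j w) = 0) →
        Tb n b (i (Fin.last (ℓ + 1))) (j (Fin.last (ℓ + 1))) = 0)
    ∧ ¬ (∀ s : Fin (ℓ + 2) → ℕ,
        ((Finset.univ.filter
            (fun b : ZMod n → ZMod n => ∀ w, Tb n b (i w) (j w) = s w)).card : ℚ) / n ^ n
          = ∏ w : Fin (ℓ + 2),
              ((Finset.univ.filter
                (fun b : ZMod n → ZMod n => Tb n b (i w) (j w) = s w)).card : ℚ) / n ^ n) := by
  have hpart1 : ∀ b : ZMod n → ZMod n,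
      (∀ w : Fin (ℓ + 2), w ≠ Fin.last (ℓ + 1) → Tb n b (i w) (j w) = 0) →
        Tb n b (i (Fin.last (ℓ + 1))) (j (Fin.last (ℓ + 1))) = 0 := by
    intro b hb
    have key : ∀ w : Fin (ℓ + 2), b (j w) = b (j 0) := by
      intro w
      induction w using Fin.induction with
      | zero => rfl
      | succ w ih =>
          have hne : w.castSucc ≠ Fin.last (ℓ + 1) := (Fin.castSucc_lt_last w).ne
          have h0 := hb w.castSucc hne
          rw [Tb, cycAbs_eq_zero, sub_eq_zero] at h0
          have hstep := hcyc w.castSucc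
          rw [Fin.coeSucc_eq_succ] at hstep
          rw [hstep, ← h0, ih]
    have hlast : j (Fin.last (ℓ + 1)) + i (Fin.last (ℓ + 1)) = j 0 := by
      have := hcyc (Fin.last (ℓ + 1))
      rw [show (Fin.last (ℓ + 1) + 1 : Fin (ℓ + 2)) = 0 by
        rw [Fin.ext_iff, Fin.add_def]; simp [Fin.val_last]] at this
      rw [← this]
    rw [Tb, cycAbs_eq_zero, hlast, key (Fin.last (ℓ + 1)), sub_self]
  refine ⟨hpart1, ?_⟩
  intro h
  classical
  set L := Fin.last (ℓ + 1) with hL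
  have hnq : (0 : ℚ) < (n : ℚ) ^ n := by positivity
  have := h (fun w => if w = L then 1 else 0)
  -- LHS card is zero
  have hempty : (Finset.univ.filter
      (fun b : ZMod n → ZMod n => ∀ w, Tb n b (i w) (j w)
        = (fun w => if w = L then 1 else 0) w)).card = 0 := by
    rw [Finset.card_eq_zero, Finset.filter_eq_empty_iff]
    intro b _ hb
    have h0 : ∀ w : Fin (ℓ + 2), w ≠ L → Tb n b (i w) (j w) = 0 := by
      intro w hw
      have := hb w
      simpa [hw] using this
    have hT := hpart1 b h0
    have hlast := hb L
    rw [hT] at hlast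
    simp at hlast
  rw [hempty] at this
  simp only [Nat.cast_zero, zero_div] at this
  -- each factor on RHS is nonzero
  have hpos : ∀ w : Fin (ℓ + 2),
      ((Finset.univ.filter (fun b : ZMod n → ZMod n =>
        Tb n b (i w) (j w) = (fun w => if w = L then 1 else 0) w)).card : ℚ) / n ^ n ≠ 0 := by
    intro w
    apply div_ne_zero _ (ne_of_gt hnq)
    rw [Nat.cast_ne_zero, ← Nat.pos_iff_ne_zero, Finset.card_pos]
    by_cases hw : w = L
    · refine ⟨fun x => if x = j L then 1 else 0,
        Finset.mem_filter.mpr ⟨Finset.mem_univ _, ?_⟩⟩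
      have hne : j L + i L ≠ j L := by
        intro hc
        apply hi L
        nth_rewrite 2 [← add_zero (j L)] at hc
        exact add_left_cancel hc
      haveI : Fact (1 < n) := ⟨hn⟩
      have hT : Tb n (fun x => if x = j L then 1 else 0) (i L) (j L) = 1 := by
        rw [Tb, if_pos rfl, if_neg hne, sub_zero]
        unfold cycAbs
        rw [ZMod.val_one, ZMod.neg_val, if_neg (one_ne_zero : (1 : ZMod n) ≠ 0),
          ZMod.val_one]
        omega
      simpa [hw] using hT
    · refine ⟨fun _ => 0, ?_⟩
      rw [Finset.mem_filter]
      refine ⟨Finset.mem_univ _, ?_⟩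
      simp only [if_neg hw]
      rw [Tb, sub_self, cycAbs_eq_zero]
  exact (Finset.prod_ne_zero_iff.mpr (fun w _ => hpos w)) this.symm
end

section
/- Let S = {(i_1,j_1), …, (i_k,j_k)} be a multiset of index pairs whose associated multigraph on ℤ_n (with edges {j_w, (j_w+i_w) mod n}) is acyclic. Then the random variables T_b(i_1,j_1), …, T_b(i_k,j_k) are mutually independent and identically distributed, and for all integers s_1,…,s_k, ℙ[T_b(i_w,j_w) = s_w for all w] = (∏_{w=1}^k m_{s_w}) / n^k. -/
/-- `m_s`, the number of residues `d ∈ ℤ_n` with `|d|_n = s`. -/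
def mval (n : ℕ) [NeZero n] (s : ℕ) : ℕ :=
  (Finset.univ.filter (fun d : ZMod n => cycAbs n d = s)).card

/-- A multiset of index pairs `(i_w, j_w)`, `w = 1,…,k`, is acyclic if its associated
multigraph is acyclic: no edge is a loop, no two indices give the same edge
(no repeated edges), and the underlying simple graph contains no cycle. -/
def IndexAcyclic (n k : ℕ) (i j : Fin k → ZMod n) : Prop :=
  (∀ w, j w ≠ j w + i w) ∧
  (Function.Injective fun w => s(j w, j w + i w)) ∧
  (SimpleGraph.fromEdgeSet (Set.range fun w => s(j w, j w + i w))).IsAcyclic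

lemma cycAbs_neg (n : ℕ) (d : ZMod n) : cycAbs n (-d) = cycAbs n d := by
  simp [cycAbs, neg_neg, min_comm]

open SimpleGraph in
lemma isAcyclic_anti {V : Type*} {G H : SimpleGraph V} (hle : G ≤ H) (hH : H.IsAcyclic) :
    G.IsAcyclic := fun _v c hc => hH (c.mapLe hle) (hc.mapLe hle)

open SimpleGraph in
/-- A finite acyclic graph with an edge has a vertex with a unique neighbor. -/
lemma exists_leaf {V : Type*} [Fintype V] [DecidableEq V] {G : SimpleGraph V}
    (hG : G.IsAcyclic) {a b : V} (hab : G.Adj a b) :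
    ∃ v u, G.Adj v u ∧ ∀ x, G.Adj v x → x = u := by
  classical
  set N := Fintype.card V with hN
  set P : ℕ → Prop := fun l => ∃ (x y : V) (p : G.Walk x y), p.IsPath ∧ p.length = l with hP
  have h1 : P 1 := ⟨a, b, Walk.cons hab Walk.nil, by simp [hab.ne], rfl⟩
  have hbd : ∀ l, P l → l < N := by rintro l ⟨x, y, p, hp, rfl⟩; exact hp.length_lt
  have h1N : 1 ≤ N := le_of_lt (hbd 1 h1)
  set L := Nat.findGreatest P N with hL
  have hPL : P L := Nat.findGreatest_spec h1N h1
  have hmax : ∀ l, P l → l ≤ L := fun l hl => Nat.le_findGreatest (le_of_lt (hbd l hl)) hl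
  have hL1 : 1 ≤ L := hmax 1 h1
  obtain ⟨x, y, p, hp, hlen⟩ := hPL
  cases p with
  | nil => simp at hlen; omega
  | @cons _ w1 _ h q =>
    refine ⟨x, w1, h, ?_⟩
    intro z hz
    by_contra hzw
    rw [Walk.cons_isPath_iff] at hp
    obtain ⟨hq, hxq⟩ := hp
    have hp' : (Walk.cons h q).IsPath := by rw [Walk.cons_isPath_iff]; exact ⟨hq, hxq⟩
    by_cases hzs : z ∈ (Walk.cons h q).support
    · -- build a cycle, contradiction
      set wpath := (Walk.cons h q).takeUntil z hzs with hwdef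
      have hwpath : wpath.IsPath := hp'.takeUntil hzs
      have hedge : s(x, z) ∉ wpath.reverse.edges := by
        rw [Walk.edges_reverse, List.mem_reverse]
        intro hmem
        have hmem' := Walk.edges_takeUntil_subset (Walk.cons h q) hzs hmem
        rw [Walk.edges_cons, List.mem_cons] at hmem'
        rcases hmem' with heq | hmem'
        · exact hzw (Sym2.congr_right.mp heq)
        · exact hxq (Walk.fst_mem_support_of_mem_edges q hmem')
      have hcyc : (Walk.cons hz wpath.reverse).IsCycle :=
        (Walk.cons_isCycle_iff _ hz).mpr ⟨hwpath.reverse, hedge⟩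
      exact hG _ hcyc
    · -- extend the path, contradiction with maximality
      have hpath' : (Walk.cons hz.symm (Walk.cons h q)).IsPath := by
        rw [Walk.cons_isPath_iff]; exact ⟨hp', hzs⟩
      have : L + 1 ≤ L := hmax (L + 1)
        ⟨z, y, Walk.cons hz.symm (Walk.cons h q), hpath', by
          simp [Walk.length_cons, hlen]⟩
      omega

/-- The key counting step: removing a leaf edge. -/
lemma count_step (n : ℕ) [NeZero n] {k : ℕ} (i j : Fin (k + 1) → ZMod n)
    (s : Fin (k + 1) → ℕ) (w : Fin (k + 1)) (v u : ZMod n) (hvu : v ≠ u)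
    (hedge : (v = j w ∧ u = j w + i w) ∨ (u = j w ∧ v = j w + i w))
    (hout : ∀ w', w' ≠ w → v ≠ j w' ∧ v ≠ j w' + i w') :
    n * (Finset.univ.filter
        (fun b : ZMod n → ZMod n => ∀ w', Tb n b (i w') (j w') = s w')).card
      = mval n (s w) * (Finset.univ.filter
        (fun b : ZMod n → ZMod n =>
          ∀ w' : Fin k, Tb n b (i (w.succAbove w')) (j (w.succAbove w'))
            = s (w.succAbove w'))).card := by
  classical
  have hTw : ∀ b : ZMod n → ZMod n, Tb n b (i w) (j w) = cycAbs n (b v - b u) := by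
    intro b
    rcases hedge with ⟨hv, hu⟩ | ⟨hu, hv⟩
    · rw [Tb, hv, hu]
    · rw [Tb, hu, hv, ← neg_sub (b (j w)), cycAbs_neg]
  have hTne : ∀ (b : ZMod n → ZMod n) (c : ZMod n) (w' : Fin (k + 1)), w' ≠ w →
      Tb n (Function.update b v c) (i w') (j w') = Tb n b (i w') (j w') := by
    intro b c w' hw'
    obtain ⟨h1, h2⟩ := hout w' hw'
    rw [Tb, Tb, Function.update_of_ne (Ne.symm h1), Function.update_of_ne (Ne.symm h2)]
  have huv : ∀ (b : ZMod n → ZMod n) (c : ZMod n), Function.update b v c u = b u :=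
    fun b c => Function.update_of_ne (Ne.symm hvu) _ _
  let A := {b : ZMod n → ZMod n // ∀ w', Tb n b (i w') (j w') = s w'}
  let B := {b : ZMod n → ZMod n //
    ∀ w' : Fin k, Tb n b (i (w.succAbove w')) (j (w.succAbove w')) = s (w.succAbove w')}
  let D := {d : ZMod n // cycAbs n d = s w}
  let e : ZMod n × A ≃ D × B :=
  { toFun := fun p =>
      (⟨p.2.1 v - p.2.1 u, by rw [← hTw]; exact p.2.2 w⟩,
       ⟨Function.update p.2.1 v p.1, fun w' => by
          rw [hTne _ _ _ (Fin.succAbove_ne w w')]; exact p.2.2 _⟩)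
    invFun := fun p =>
      (p.2.1 v,
       ⟨Function.update p.2.1 v (p.2.1 u + p.1.1), fun w' => by
          rcases eq_or_ne w' w with rfl | hne
          · rw [hTw, Function.update_self, huv]
            simpa using p.1.2
          · rw [hTne _ _ _ hne]
            obtain ⟨z, hzz⟩ := Fin.exists_succAbove_eq hne
            rw [← hzz]; exact p.2.2 z⟩)
    left_inv := by
      rintro ⟨c, b, hb⟩
      refine Prod.ext (by simp) (Subtype.ext ?_)
      simp only [huv, Function.update_self, Function.update_idem]
      have : b u + (b v - b u) = b v := by ring
      rw [this, Function.update_eq_self]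
    right_inv := by
      rintro ⟨⟨d, hd⟩, b, hb⟩
      refine Prod.ext (Subtype.ext ?_) (Subtype.ext ?_)
      · simp only [Function.update_self, huv]; ring
      · simp only [Function.update_self, Function.update_idem]
        rw [Function.update_eq_self] }
  have hcard := Fintype.card_congr e
  rw [Fintype.card_prod, Fintype.card_prod, ZMod.card] at hcard
  have hA : Fintype.card A = (Finset.univ.filter
      (fun b : ZMod n → ZMod n => ∀ w', Tb n b (i w') (j w') = s w')).card :=
    Fintype.card_subtype _
  have hB : Fintype.card B = (Finset.univ.filter
      (fun b : ZMod n → ZMod n =>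
        ∀ w' : Fin k, Tb n b (i (w.succAbove w')) (j (w.succAbove w'))
          = s (w.succAbove w'))).card :=
    Fintype.card_subtype _
  have hD : Fintype.card D = mval n (s w) := Fintype.card_subtype _
  rw [hA, hB, hD] at hcard
  exact hcard

lemma key_count (n : ℕ) [NeZero n] :
    ∀ (k : ℕ) (i j : Fin k → ZMod n), IndexAcyclic n k i j → ∀ s : Fin k → ℕ,
    (Finset.univ.filter
        (fun b : ZMod n → ZMod n => ∀ w, Tb n b (i w) (j w) = s w)).card * n ^ k
      = (∏ w, mval n (s w)) * n ^ n := by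
  intro k
  induction k with
  | zero =>
    intro i j _ s
    have : (Finset.univ.filter
        (fun b : ZMod n → ZMod n => ∀ w : Fin 0, Tb n b (i w) (j w) = s w))
        = Finset.univ := by
      apply Finset.filter_true_of_mem
      intro b _ w
      exact w.elim0
    rw [this]
    simp [Finset.card_univ, ZMod.card]
  | succ k ih =>
    intro i j hacyc s
    obtain ⟨hloop, hinj, hG⟩ := hacyc
    classical
    set G := SimpleGraph.fromEdgeSet (Set.range fun w => s(j w, j w + i w)) with hGdef
    have hadjE : ∀ w, G.Adj (j w) (j w + i w) := fun w =>
      (SimpleGraph.fromEdgeSet_adj _).mpr ⟨⟨w, rfl⟩, hloop w⟩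
    obtain ⟨v, u, hvu, huniq⟩ := exists_leaf hG (hadjE 0)
    obtain ⟨hmem, hne⟩ := (SimpleGraph.fromEdgeSet_adj _).mp hvu
    obtain ⟨w, hw⟩ := hmem
    replace hw : s(j w, j w + i w) = s(v, u) := hw
    have hedge : (v = j w ∧ u = j w + i w) ∨ (u = j w ∧ v = j w + i w) := by
      rw [Sym2.eq_iff] at hw
      tauto
    have hout : ∀ w', w' ≠ w → v ≠ j w' ∧ v ≠ j w' + i w' := by
      intro w' hw'
      constructor
      · intro hv
        have hadj : G.Adj v (j w' + i w') := hv ▸ hadjE w'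
        have := huniq _ hadj
        apply hw'
        apply hinj
        show s(j w', j w' + i w') = s(j w, j w + i w)
        rw [hw, this, hv]
      · intro hv
        have hadj : G.Adj v (j w') := hv ▸ (hadjE w').symm
        have := huniq _ hadj
        apply hw'
        apply hinj
        show s(j w', j w' + i w') = s(j w, j w + i w)
        rw [hw, ← hv, this]
        exact Sym2.eq_swap
    have hstep := count_step n i j s w v u hne hedge hout
    -- apply induction hypothesis to the remaining edges
    have hacyc' : IndexAcyclic n k (i ∘ w.succAbove) (j ∘ w.succAbove) := by
      refine ⟨fun w' => hloop _, ?_, ?_⟩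
      · intro a b hab
        exact Fin.succAbove_right_injective (hinj hab)
      · apply isAcyclic_anti _ hG
        apply SimpleGraph.fromEdgeSet_mono
        rintro e ⟨z, rfl⟩
        exact ⟨w.succAbove z, rfl⟩
    have hih := ih (i ∘ w.succAbove) (j ∘ w.succAbove) hacyc' (s ∘ w.succAbove)
    simp only [Function.comp] at hih
    have hprod : (∏ w' : Fin (k + 1), mval n (s w'))
        = mval n (s w) * ∏ w' : Fin k, mval n (s (w.succAbove w')) :=
      Fin.prod_univ_succAbove (fun w' => mval n (s w')) w
    calc (Finset.univ.filter
          (fun b : ZMod n → ZMod n => ∀ w', Tb n b (i w') (j w') = s w')).card * n ^ (k + 1)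
        = (n * (Finset.univ.filter
          (fun b : ZMod n → ZMod n => ∀ w', Tb n b (i w') (j w') = s w')).card) * n ^ k := by
          ring
      _ = (mval n (s w) * (Finset.univ.filter
          (fun b : ZMod n → ZMod n =>
            ∀ w' : Fin k, Tb n b (i (w.succAbove w')) (j (w.succAbove w'))
              = s (w.succAbove w'))).card) * n ^ k := by rw [hstep]
      _ = mval n (s w) * ((Finset.univ.filter
          (fun b : ZMod n → ZMod n =>
            ∀ w' : Fin k, Tb n b (i (w.succAbove w')) (j (w.succAbove w'))
              = s (w.succAbove w'))).card * n ^ k) := by ring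
      _ = mval n (s w) * ((∏ w' : Fin k, mval n (s (w.succAbove w'))) * n ^ n) := by rw [hih]
      _ = (∏ w' : Fin (k + 1), mval n (s w')) * n ^ n := by rw [hprod]; ring

/-- If the multiset of index pairs is acyclic, then the random variables
`T_b(i_w,j_w)` are i.i.d.: for all integers `s_1,…,s_k`,
`ℙ[T_b(i_w,j_w) = s_w for all w] = (∏ m_{s_w}) / n^k`. -/
theorem acyclic_indices_iid (n : ℕ) [NeZero n] (k : ℕ) (i j : Fin k → ZMod n)
    (hacyc : IndexAcyclic n k i j) (s : Fin k → ℕ) :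
    ((Finset.univ.filter
        (fun b : ZMod n → ZMod n => ∀ w, Tb n b (i w) (j w) = s w)).card : ℚ) / n ^ n
      = (∏ w : Fin k, (mval n (s w) : ℚ)) / n ^ k := by
  have hn : (n : ℚ) ≠ 0 := Nat.cast_ne_zero.mpr (NeZero.ne n)
  rw [div_eq_div_iff (pow_ne_zero _ hn) (pow_ne_zero _ hn)]
  have hkey := key_count n k i j hacyc s
  have := congrArg (fun m : ℕ => (m : ℚ)) hkey
  push_cast at this
  convert this using 2
end

section
/- For 1 ≤ i ≤ ⌊n/2⌋ with ℓ_i := n/gcd(n,i) ≥ 2 and n ≥ 2, the chromatic polynomial of C_n(i) evaluated at n satisfies P_i(n)/n^n ≤ exp( −1 + n/(ℓ_i (n−1)^{ℓ_i − 1}) ). -/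
/-- The circulant graph `C_n(i)` on vertex set `ℤ_n`: `r ~ s` iff `|r − s|_n = i`. -/
def circulant (n i : ℕ) : SimpleGraph (ZMod n) :=
  SimpleGraph.fromRel (fun r s => cycAbs n (r - s) = i)

/-- The chromatic polynomial of `C_n(i)` evaluated at `x`: the number of proper colorings
of `C_n(i)` with `x` colors. -/
noncomputable def Pchrom (n i x : ℕ) : ℕ :=
  Nat.card {c : ZMod n → Fin x // ∀ u v : ZMod n, (circulant n i).Adj u v → c u ≠ c v}

/-!
Since `i ≤ n / 2`, the neighbours of `v` in `C_n(i)` are `v ± i`, so the proper colourings are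
the `c` with `c v ≠ c (v + i)` for all `v`. Under `v ↦ v + i` each of the `g = gcd(n, i)` cosets
of `⟨i⟩ ≤ ℤ_n` is a cycle of length `ℓ`, hence `P_i(x) = C_ℓ(x) ^ g`, where `C_m(x)` counts the
colourings of the `m`-cycle. A colouring of the path on `m + 2` vertices closes up to a colouring
of the `(m + 2)`-cycle if its end colours differ and of the `(m + 1)`-cycle if they agree, so
`C_{m+2}(x) + C_{m+1}(x) = x (x - 1)^(m + 1)` and `C_ℓ(x) = (x - 1)^ℓ + (-1)^ℓ (x - 1)`.
Finally, with `g ℓ = n`,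
`P_i(n) / n^n ≤ (1 - 1/n)^n (1 + (n - 1)^(1 - ℓ))^g ≤ e^(-1) e^(g / (n - 1)^(ℓ - 1))`.
-/

abbrev ShiftColoring (α : Type*) {G : Type*} [Add G] (a : G) : Type _ :=
  {c : G → α // ∀ v, c v ≠ c (v + a)}

abbrev CycleColoring (α : Type*) (m : ℕ) : Type _ :=
  ShiftColoring α (1 : ZMod m)

abbrev PathColoring (α : Type*) (m : ℕ) : Type _ :=
  {e : Fin (m + 1) → α // ∀ k : Fin m, e k.castSucc ≠ e k.succ}

section Colorings

variable {α : Type*}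

theorem Fin.forall_snoc_castSucc_ne_snoc_succ_iff {m : ℕ} (f : Fin (m + 1) → α) (y : α) :
    (∀ k : Fin (m + 1),
        Fin.snoc (α := fun _ => α) f y k.castSucc ≠ Fin.snoc (α := fun _ => α) f y k.succ) ↔
      (∀ k : Fin m, f k.castSucc ≠ f k.succ) ∧ f (Fin.last m) ≠ y := by
  rw [Fin.forall_fin_succ']
  simp only [Fin.snoc_castSucc, Fin.succ_castSucc, Fin.succ_last, Fin.snoc_last]

-- `ZMod (m + 1)` is definitionally `Fin (m + 1)`, with wrap-around addition.
theorem ZMod.forall_ne_add_one_iff {m : ℕ} (f : Fin (m + 1) → α) :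
    (∀ j : ZMod (m + 1), f j ≠ f (j + 1 : ZMod (m + 1))) ↔
      (∀ k : Fin m, f k.castSucc ≠ f k.succ) ∧ f (Fin.last m) ≠ f 0 := by
  refine Fin.forall_fin_succ'.trans (and_congr (forall_congr' fun k => ?_) ?_)
  · exact iff_of_eq (congrArg (f k.castSucc ≠ f ·) Fin.coeSucc_eq_succ)
  · exact iff_of_eq (congrArg (f (Fin.last m) ≠ f ·) (Fin.last_add_one m))

theorem cast_card_subtype_ne [Finite α] (c : α) :
    (Nat.card {y // c ≠ y} : ℤ) = Nat.card α - 1 := by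
  have := Fintype.ofFinite α
  classical
  simp only [Nat.card_eq_fintype_card, ne_eq, Fintype.card_subtype_compl, Fintype.card_subtype_eq']
  rw [Nat.cast_pred (Fintype.card_pos_iff.2 ⟨c⟩)]

namespace PathColoring

def succEquivSigma (m : ℕ) :
    PathColoring α (m + 1) ≃ Σ f : PathColoring α m, {y // f.1 (Fin.last m) ≠ y} where
  toFun e :=
    have h := (Fin.forall_snoc_castSucc_ne_snoc_succ_iff (Fin.init e.1) (e.1 (Fin.last _))).1
      (by rw [Fin.snoc_init_self]; exact e.2)
    ⟨⟨Fin.init e.1, h.1⟩, e.1 (Fin.last _), h.2⟩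
  invFun p :=
    ⟨Fin.snoc p.1.1 p.2.1, (Fin.forall_snoc_castSucc_ne_snoc_succ_iff _ _).2 ⟨p.1.2, p.2.2⟩⟩
  left_inv e := Subtype.ext (Fin.snoc_init_self e.1)
  right_inv p := Sigma.subtype_ext (Subtype.ext (Fin.init_snoc (α := fun _ => α) _ _))
    (Fin.snoc_last (α := fun _ => α) _ _)

theorem card [Finite α] (m : ℕ) :
    (Nat.card (PathColoring α m) : ℤ) = Nat.card α * (Nat.card α - 1) ^ m := by
  induction m with
  | zero =>
    rw [Nat.card_congr ((Equiv.subtypeUnivEquiv fun _ k => k.elim0).trans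
      (Equiv.funUnique (Fin 1) α))]
    simp
  | succ m ih =>
    have := Fintype.ofFinite (PathColoring α m)
    rw [Nat.card_congr (succEquivSigma m), Nat.card_sigma, Nat.cast_sum]
    simp only [cast_card_subtype_ne, Finset.sum_const, Finset.card_univ, nsmul_eq_mul,
      ← Nat.card_eq_fintype_card, ih]
    ring

end PathColoring

namespace CycleColoring

def equivPathColoringNe (m : ℕ) :
    CycleColoring α (m + 1) ≃ {e : PathColoring α m // e.1 (Fin.last m) ≠ e.1 0} :=
  (Equiv.subtypeEquivRight ZMod.forall_ne_add_one_iff).trans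
    (Equiv.subtypeSubtypeEquivSubtypeInter _ _).symm

def equivPathColoringEq (m : ℕ) :
    CycleColoring α (m + 1) ≃ {e : PathColoring α (m + 1) // e.1 (Fin.last _) = e.1 0} where
  toFun c := ⟨⟨Fin.snoc c.1 (c.1 0), (Fin.forall_snoc_castSucc_ne_snoc_succ_iff _ _).2
      ((ZMod.forall_ne_add_one_iff _).1 c.2)⟩,
    (Fin.snoc_last (α := fun _ => α) _ _).trans
      (Fin.snoc_castSucc (α := fun _ => α) (c.1 0) _ 0).symm⟩
  invFun e := ⟨Fin.init e.1.1, (ZMod.forall_ne_add_one_iff _).2 (by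
    have h := e.1.2
    rw [← Fin.snoc_init_self e.1.1, e.2] at h
    exact (Fin.forall_snoc_castSucc_ne_snoc_succ_iff _ _).1 h)⟩
  left_inv c := Subtype.ext (Fin.init_snoc (α := fun _ => α) _ _)
  right_inv e := Subtype.ext (Subtype.ext (by
    conv_rhs => rw [← Fin.snoc_init_self e.1.1, e.2]
    rfl))

theorem card_add_card_succ [Finite α] (m : ℕ) :
    Nat.card (CycleColoring α (m + 1)) + Nat.card (CycleColoring α (m + 2)) =
      Nat.card (PathColoring α (m + 1)) := by
  classical
  rw [Nat.card_congr (equivPathColoringEq m), Nat.card_congr (equivPathColoringNe (m + 1)),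
    ← Nat.card_sum]
  exact Nat.card_congr (Equiv.sumCompl _)

theorem card [Finite α] {m : ℕ} (hm : m ≠ 0) :
    (Nat.card (CycleColoring α m) : ℤ) = (Nat.card α - 1) ^ m + (-1) ^ m * (Nat.card α - 1) := by
  obtain ⟨k, rfl⟩ := Nat.exists_eq_add_one_of_ne_zero hm
  induction k with
  | zero =>
    have : IsEmpty (CycleColoring α 1) :=
      ⟨fun c => c.2 0 (congrArg c.1 (Subsingleton.elim _ _))⟩
    simp
  | succ k ih =>
    have h := congrArg (Nat.cast (R := ℤ)) (card_add_card_succ (α := α) k)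
    push_cast at h
    rw [PathColoring.card, ih k.succ_ne_zero] at h
    linear_combination h

theorem card_le [Finite α] [Nonempty α] {m : ℕ} (hm : m ≠ 0) :
    (Nat.card (CycleColoring α m) : ℝ) ≤ (Nat.card α - 1) ^ m + (Nat.card α - 1) := by
  have h := congrArg (Int.cast (R := ℝ)) (card (α := α) hm)
  push_cast at h
  have hα : (0 : ℝ) ≤ Nat.card α - 1 := sub_nonneg.2 (by exact_mod_cast Nat.card_pos (α := α))
  rw [h]
  rcases neg_one_pow_eq_or ℝ m with h1 | h1 <;> rw [h1] <;> linarith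

end CycleColoring

end Colorings

section Shift

open AddSubgroup

variable {G : Type*} [AddGroup G] [Finite G]

theorem exists_quotient_prod_zmod_equiv (a : G) :
    ∃ ψ : (G ⧸ zmultiples a) × ZMod (addOrderOf a) ≃ G, ∀ q j, ψ (q, j + 1) = ψ (q, j) + a := by
  have : NeZero (addOrderOf a) := ⟨(addOrderOf_pos a).ne'⟩
  let ψ : (G ⧸ zmultiples a) × ZMod (addOrderOf a) → G := fun p => p.1.out + p.2.val • a
  have hψ : ∀ q j, ψ (q, j + 1) = ψ (q, j) + a := fun q j => by
    simp only [ψ, ZMod.val_add, ZMod.val_one_eq_one_mod, mod_addOrderOf_nsmul, add_nsmul,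
      one_nsmul, add_assoc]
  have hinj : Function.Injective ψ := by
    rintro ⟨q, j⟩ ⟨q', j'⟩ h
    have hq : q = q' := by
      simpa [ψ, QuotientAddGroup.mk_add_of_mem _ (nsmul_mem_zmultiples a _)] using
        congrArg (QuotientAddGroup.mk (s := zmultiples a)) h
    subst hq
    have hj := nsmul_injOn_Iio_addOrderOf j.val_lt j'.val_lt (add_left_cancel h)
    exact Prod.ext rfl (ZMod.val_injective _ hj)
  refine ⟨Equiv.ofBijective ψ (hinj.bijective_of_nat_card_le ?_), hψ⟩
  rw [Nat.card_prod, Nat.card_zmod, ← Nat.card_zmultiples,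
    ← card_eq_card_quotient_mul_card_addSubgroup]

theorem ShiftColoring.card_eq_cycleColoring_pow (α : Type*) (a : G) :
    Nat.card (ShiftColoring α a) =
      Nat.card (CycleColoring α (addOrderOf a)) ^ Nat.card (G ⧸ zmultiples a) := by
  obtain ⟨ψ, hψ⟩ := exists_quotient_prod_zmod_equiv a
  have e : ShiftColoring α a ≃ (G ⧸ zmultiples a → CycleColoring α (addOrderOf a)) :=
    (Equiv.subtypeEquiv ((ψ.arrowCongr (Equiv.refl α)).symm.trans (Equiv.curry _ _ _)) fun c => by
      rw [ψ.symm.forall_congr_left]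
      simp only [Prod.forall, Equiv.symm_symm, ← hψ]
      rfl).trans Equiv.subtypePiEquivPi
  rw [Nat.card_congr e, Nat.card_fun]

end Shift

theorem cycAbs_eq_natAbs_valMinAbs {n : ℕ} [NeZero n] (d : ZMod n) :
    cycAbs n d = d.valMinAbs.natAbs := by
  rw [cycAbs, ZMod.valMinAbs_natAbs_eq_min, ZMod.neg_val]
  split_ifs with h <;> simp [h]

theorem cycAbs_eq_iff {n i : ℕ} [NeZero n] (hi : i ≤ n / 2) (d : ZMod n) :
    cycAbs n d = i ↔ d = i ∨ d = -i := by
  rw [cycAbs_eq_natAbs_valMinAbs, ← ZMod.natAbs_valMinAbs_eq_natAbs_valMinAbs,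
    ZMod.valMinAbs_natCast_of_le_half hi, Int.natAbs_natCast]

theorem circulant_adj_iff {n i : ℕ} [NeZero n] (hi0 : 0 < i) (hi : i ≤ n / 2) {u v : ZMod n} :
    (circulant n i).Adj u v ↔ u = v + i ∨ v = u + i := by
  have hi' : (i : ZMod n) ≠ 0 := by
    rw [Ne, ← ZMod.valMinAbs_eq_zero, ZMod.valMinAbs_natCast_of_le_half hi]
    exact_mod_cast hi0.ne'
  rw [circulant, SimpleGraph.fromRel_adj, cycAbs_eq_iff hi, cycAbs_eq_iff hi]
  constructor
  · rintro ⟨-, (h | h) | (h | h)⟩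
    exacts [.inl (by linear_combination h), .inr (by linear_combination -h),
      .inr (by linear_combination h), .inl (by linear_combination -h)]
  · rintro (rfl | rfl)
    · exact ⟨by simpa using hi', .inl (.inl (by ring))⟩
    · exact ⟨by simpa using hi', .inr (.inl (by ring))⟩

theorem pchrom_eq_card_shiftColoring {n i : ℕ} [NeZero n] (hi0 : 0 < i) (hi : i ≤ n / 2) (x : ℕ) :
    Pchrom n i x = Nat.card (ShiftColoring (Fin x) (i : ZMod n)) :=
  Nat.card_congr <| Equiv.subtypeEquivRight fun c =>
    ⟨fun h v => (h _ _ ((circulant_adj_iff hi0 hi).2 (Or.inl rfl))).symm, fun h u v huv => by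
      rcases (circulant_adj_iff hi0 hi).1 huv with rfl | rfl
      exacts [(h v).symm, h u]⟩

theorem pow_div_pow_le_exp {n g ℓ : ℕ} (hn : 2 ≤ n) (hgℓ : g * ℓ = n) {C : ℝ} (hC0 : 0 ≤ C)
    (hC : C ≤ ((n : ℝ) - 1) ^ ℓ + ((n : ℝ) - 1)) :
    C ^ g / (n : ℝ) ^ n ≤ Real.exp (-1 + n / (ℓ * ((n : ℝ) - 1) ^ (ℓ - 1))) := by
  have hℓ : ℓ ≠ 0 := by rintro rfl; omega
  have hn' : (2 : ℝ) ≤ n := by exact_mod_cast hn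
  set a : ℝ := n - 1
  have ha : 0 < a := by linarith
  set t : ℝ := (a ^ (ℓ - 1))⁻¹
  have hat : a ^ ℓ * t = a := by
    rw [← pow_sub_one_mul hℓ, mul_comm _ a, mul_assoc, mul_inv_cancel₀ (by positivity), mul_one]
  have hCt : C ≤ a ^ ℓ * (1 + t) := by rwa [mul_one_add, hat]
  have hgt : (g : ℝ) * t = n / (ℓ * a ^ (ℓ - 1)) := by
    rw [← hgℓ]; push_cast; simp only [t]; field_simp
  calc C ^ g / (n : ℝ) ^ n ≤ (a ^ ℓ * (1 + t)) ^ g / (n : ℝ) ^ n := by gcongr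
    _ = (1 - 1 / n) ^ n * (1 + t) ^ g := by
      rw [mul_pow, ← pow_mul, mul_comm ℓ, hgℓ, one_sub_div (by positivity), div_pow]
      ring
    _ ≤ Real.exp (-1) * Real.exp t ^ g := by
      gcongr
      · exact Real.one_sub_div_pow_le_exp_neg (by linarith)
      · linarith [Real.add_one_le_exp t]
    _ = Real.exp (-1 + n / (ℓ * a ^ (ℓ - 1))) := by
      rw [← Real.exp_nat_mul, hgt, Real.exp_add]

theorem chromatic_ratio_upper_bound_general (n i : ℕ) [NeZero n] (hn : 2 ≤ n)
    (hi1 : 1 ≤ i) (hi2 : i ≤ n / 2) :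
    (Pchrom n i n : ℝ) / (n : ℝ) ^ n
      ≤ Real.exp (-1 + (n : ℝ) /
          ((n / Nat.gcd n i : ℕ) * ((n : ℝ) - 1) ^ (n / Nat.gcd n i - 1))) := by
  have hℓ : addOrderOf (i : ZMod n) = n / n.gcd i := ZMod.addOrderOf_coe i (NeZero.ne n)
  have hgℓ :
      Nat.card (ZMod n ⧸ AddSubgroup.zmultiples (i : ZMod n)) * addOrderOf (i : ZMod n) = n := by
    rw [← Nat.card_zmultiples, ← AddSubgroup.card_eq_card_quotient_mul_card_addSubgroup,
      Nat.card_zmod]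
  have hC := CycleColoring.card_le (α := Fin n) (addOrderOf_pos (i : ZMod n)).ne'
  rw [Nat.card_fin] at hC
  rw [pchrom_eq_card_shiftColoring hi1 hi2, ShiftColoring.card_eq_cycleColoring_pow, Nat.cast_pow,
    ← hℓ]
  exact pow_div_pow_le_exp hn hgℓ (Nat.cast_nonneg _) hC

/-- For `1 ≤ i ≤ ⌊n/2⌋` with `ℓ_i = n / gcd(n,i) ≥ 2` and `n ≥ 2`,
`P_i(n)/n^n ≤ exp(−1 + n/(ℓ_i (n−1)^{ℓ_i − 1}))`. -/
theorem chromatic_ratio_upper_bound (n i : ℕ) [NeZero n] (hn : 2 ≤ n)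
    (hi1 : 1 ≤ i) (hi2 : i ≤ n / 2) (hl : 2 ≤ n / Nat.gcd n i) :
    (Pchrom n i n : ℝ) / (n : ℝ) ^ n
      ≤ Real.exp (-1 + (n : ℝ) /
          ((n / Nat.gcd n i : ℕ) * ((n : ℝ) - 1) ^ (n / Nat.gcd n i - 1))) :=
  chromatic_ratio_upper_bound_general n i hn hi1 hi2
end
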